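/- arXiv:1807.08437 — 5 statements merged into one kernel-verified Lean document; each statement's English description precedes it below -/
import Mathlib

section
/- If (W,X,Y,Z,σ) satisfies the singular value equations of an algebraic curvature tensor with respect to a Lorentzian (pseudo-) inner product with ⟨W,W⟩ = ⟨X,X⟩ = ⟨Y,Y⟩ = 1 and ⟨Z,Z⟩ = −1, then σ = 0. -/
/-!
Pair symmetry identifies `⟨Z, R(X,W)Y⟩ = σ⟨Z,Z⟩` with `⟨X, R(Z,Y)W⟩ = σ⟨X,X⟩`;
since `⟨Z,Z⟩` and `⟨X,X⟩` have opposite signs, `σ = -σ`.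
-/

theorem mul_apply_self_eq_of_pair_symm {V : Type*} [AddCommGroup V] [Module ℝ V]
    (B : V →ₗ[ℝ] V →ₗ[ℝ] ℝ) (R : V →ₗ[ℝ] V →ₗ[ℝ] V →ₗ[ℝ] V)
    (hpair : ∀ w x y z : V, B w (R y z x) = B y (R w x z))
    {W X Y Z : V} {σ : ℝ} (hZY : R Z Y W = σ • X) (hXW : R X W Y = σ • Z) :
    σ * B Z Z = σ * B X X := by
  have h := hpair Z Y X W
  rwa [hXW, hZY, map_smul, map_smul, smul_eq_mul, smul_eq_mul] at h

theorem svp_lorentzian_sigma_zero_general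
    {V : Type*} [AddCommGroup V] [Module ℝ V]
    (B : V →ₗ[ℝ] V →ₗ[ℝ] ℝ)
    (R : V →ₗ[ℝ] V →ₗ[ℝ] V →ₗ[ℝ] V)
    (hpair : ∀ w x y z : V, B w (R y z x) = B y (R w x z))
    (W X Y Z : V) (σ : ℝ)
    (hX : B X X = 1) (hZ : B Z Z = -1)
    (e2 : R Z Y W = σ • X)
    (e4 : R X W Y = σ • Z) :
    σ = 0 := by
  have h := mul_apply_self_eq_of_pair_symm B R hpair e2 e4
  rw [hX, hZ] at h
  linarith

/-- Remark 2 (Lorentzian case): if the singular value equations hold with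
respect to a nondegenerate symmetric bilinear form and
`⟨W,W⟩ = ⟨X,X⟩ = ⟨Y,Y⟩ = 1`, `⟨Z,Z⟩ = -1`, then `σ = 0`. -/
theorem svp_lorentzian_sigma_zero
    {V : Type*} [AddCommGroup V] [Module ℝ V]
    (B : V →ₗ[ℝ] V →ₗ[ℝ] ℝ)
    (hsymm : ∀ u v : V, B u v = B v u)
    (hnondeg : ∀ u : V, (∀ v : V, B u v = 0) → u = 0)
    (R : V →ₗ[ℝ] V →ₗ[ℝ] V →ₗ[ℝ] V)
    (hanti1 : ∀ w x y z : V, B w (R y z x) = -B x (R y z w))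
    (hanti2 : ∀ w x y z : V, B w (R y z x) = -B w (R z y x))
    (hpair : ∀ w x y z : V, B w (R y z x) = B y (R w x z))
    (W X Y Z : V) (σ : ℝ)
    (hW : B W W = 1) (hX : B X X = 1) (hY : B Y Y = 1) (hZ : B Z Z = -1)
    (e1 : R Y Z X = σ • W) (e2 : R Z Y W = σ • X)
    (e3 : R W X Z = σ • Y) (e4 : R X W Y = σ • Z) :
    σ = 0 :=
  svp_lorentzian_sigma_zero_general B R hpair W X Y Z σ hX hZ e2 e4
end

section
/- For the constant-curvature tensor R(X,Y)Z = κ(⟨Z,Y⟩X − ⟨Z,X⟩Y) with κ ≠ 0, every nonzero singular value σ of a singular 5-tuple of unit vectors satisfies σ = |κ|; in particular σ² = κ². -/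
open scoped RealInnerProductSpace

/-! Pairing the third equation with `Z` shows `Y ⟂ Z` (the curvature operator is skew). Writing
`a = ⟪X, Z⟫`, `b = ⟪X, Y⟫`, `c = ⟪W, Y⟫`, `d = ⟪W, Z⟫`, the first two equations express `σ W` and
`σ X` in the orthonormal pair `(Y, Z)`, giving `σ (c, d) = κ (a, -b)` and `σ (a, b) = κ (c, -d)`,
hence `σ² (a, b) = κ² (a, b)`. Pairing the first equation with `W` gives `σ = κ (ac - bd)`, so
`σ² = κ² (a² + b²)`; thus `(a, b) ≠ 0` and `σ² = κ²`. -/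

section InnerProduct

variable {V : Type*} [NormedAddCommGroup V] [InnerProductSpace ℝ V]

lemma real_inner_smul_sub_smul_left (κ p q : ℝ) (A B C : V) :
    ⟪κ • (p • A - q • B), C⟫ = κ * (p * ⟪A, C⟫ - q * ⟪B, C⟫) := by
  simp only [real_inner_smul_left, inner_sub_left]

lemma real_inner_constCurv_self (κ : ℝ) (T U S : V) :
    ⟪κ • (⟪T, U⟫ • S - ⟪T, S⟫ • U), T⟫ = 0 := by
  rw [real_inner_smul_sub_smul_left, real_inner_comm T U, real_inner_comm T S]
  ring

lemma inner_eq_of_smul_eq_smul_sub_smul {κ σ p q : ℝ} {U Y Z : V}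
    (hY : ‖Y‖ = 1) (hZ : ‖Z‖ = 1) (hYZ : ⟪Y, Z⟫ = 0)
    (h : κ • (p • Y - q • Z) = σ • U) :
    σ * ⟪U, Y⟫ = κ * p ∧ σ * ⟪U, Z⟫ = -(κ * q) := by
  have hZY : ⟪Z, Y⟫ = 0 := by rw [real_inner_comm, hYZ]
  have hYY : ⟪Y, Y⟫ = 1 := by rw [real_inner_self_eq_norm_sq, hY, one_pow]
  have hZZ : ⟪Z, Z⟫ = 1 := by rw [real_inner_self_eq_norm_sq, hZ, one_pow]
  constructor
  · have hpair := congrArg (⟪·, Y⟫) h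
    rw [real_inner_smul_sub_smul_left, real_inner_smul_left, hYY, hZY] at hpair
    linarith
  · have hpair := congrArg (⟪·, Z⟫) h
    rw [real_inner_smul_sub_smul_left, real_inner_smul_left, hYZ, hZZ] at hpair
    linarith

end InnerProduct

lemma sq_eq_sq_of_coordinate_relations {κ σ a b c d : ℝ} (hσ : σ ≠ 0)
    (hc : σ * c = κ * a) (hd : σ * d = -(κ * b))
    (ha : σ * a = κ * c) (hb : σ * b = -(κ * d))
    (hσ_eq : σ = κ * (a * c - b * d)) :
    σ ^ 2 = κ ^ 2 := by
  have ha2 : σ ^ 2 * a = κ ^ 2 * a := by linear_combination σ * ha + κ * hc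
  have hb2 : σ ^ 2 * b = κ ^ 2 * b := by linear_combination σ * hb - κ * hd
  have hsum : σ ^ 2 = κ ^ 2 * (a ^ 2 + b ^ 2) := by
    linear_combination σ * hσ_eq + κ * a * hc - κ * b * hd
  have h : σ ^ 2 * (σ ^ 2 - κ ^ 2) = 0 := by
    linear_combination (σ ^ 2 - κ ^ 2) * hsum + κ ^ 2 * a * ha2 + κ ^ 2 * b * hb2
  exact sub_eq_zero.1 ((mul_eq_zero.1 h).resolve_left (pow_ne_zero 2 hσ))

theorem svp_constant_curvature_sigma_abs_general
    {V : Type*} [NormedAddCommGroup V] [InnerProductSpace ℝ V]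
    (κ : ℝ) (W X Y Z : V) (σ : ℝ)
    (hW : ‖W‖ = 1) (hY : ‖Y‖ = 1) (hZ : ‖Z‖ = 1)
    (e1 : κ • (⟪X, Z⟫ • Y - ⟪X, Y⟫ • Z) = σ • W)
    (e2 : κ • (⟪W, Y⟫ • Z - ⟪W, Z⟫ • Y) = σ • X)
    (e3 : κ • (⟪Z, X⟫ • W - ⟪Z, W⟫ • X) = σ • Y)
    (hσ : σ ≠ 0) :
    σ ^ 2 = κ ^ 2 ∧ (0 ≤ σ → σ = |κ|) := by
  have hYZ : ⟪Y, Z⟫ = 0 := by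
    have h := congrArg (⟪·, Z⟫) e3
    rw [real_inner_constCurv_self, real_inner_smul_left] at h
    exact (mul_eq_zero.1 h.symm).resolve_left hσ
  have hZY : ⟪Z, Y⟫ = 0 := by rw [real_inner_comm, hYZ]
  obtain ⟨hc, hd⟩ := inner_eq_of_smul_eq_smul_sub_smul hY hZ hYZ e1
  obtain ⟨ha, hb⟩ := inner_eq_of_smul_eq_smul_sub_smul hZ hY hZY e2
  have hσ_eq : σ = κ * (⟪X, Z⟫ * ⟪W, Y⟫ - ⟪X, Y⟫ * ⟪W, Z⟫) := by
    have h := congrArg (⟪·, W⟫) e1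
    rw [real_inner_smul_sub_smul_left, real_inner_smul_left, real_inner_self_eq_norm_sq, hW,
      real_inner_comm W Y, real_inner_comm W Z] at h
    linarith
  have hsq := sq_eq_sq_of_coordinate_relations hσ hc hd ha hb hσ_eq
  refine ⟨hsq, fun hσ0 => ?_⟩
  rw [← abs_of_nonneg hσ0]
  exact (sq_eq_sq_iff_abs_eq_abs σ κ).1 hsq

/-- Example 2: for the constant sectional curvature tensor with `κ ≠ 0`,
every nonzero singular value satisfies `σ² = κ²`, i.e. `σ = |κ|` if `σ ≥ 0`. -/
theorem svp_constant_curvature_sigma_abs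
    {V : Type*} [NormedAddCommGroup V] [InnerProductSpace ℝ V]
    (κ : ℝ) (hκ : κ ≠ 0) (W X Y Z : V) (σ : ℝ)
    (hW : ‖W‖ = 1) (hX : ‖X‖ = 1) (hY : ‖Y‖ = 1) (hZ : ‖Z‖ = 1)
    (e1 : κ • (⟪X, Z⟫ • Y - ⟪X, Y⟫ • Z) = σ • W)
    (e2 : κ • (⟪W, Y⟫ • Z - ⟪W, Z⟫ • Y) = σ • X)
    (e3 : κ • (⟪Z, X⟫ • W - ⟪Z, W⟫ • X) = σ • Y)
    (e4 : κ • (⟪Y, W⟫ • X - ⟪Y, X⟫ • W) = σ • Z)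
    (hσ : σ ≠ 0) :
    σ ^ 2 = κ ^ 2 ∧ (0 ≤ σ → σ = |κ|) :=
  svp_constant_curvature_sigma_abs_general κ W X Y Z σ hW hY hZ e1 e2 e3 hσ
end

section
/- For the constant-curvature tensor R(X,Y)Z = κ(⟨Z,Y⟩X − ⟨Z,X⟩Y) with κ ≠ 0, any singular 5-tuple (W,X,Y,Z,σ) of unit vectors with σ ≠ 0 satisfies |⟨W,Y⟩| = |⟨X,Z⟩|, |⟨W,Z⟩| = |⟨X,Y⟩|, and ⟨W,Y⟩² + ⟨W,Z⟩² = 1. -/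
/-!
Pairing the four defining equations with `W` and `X` turns them into scalar equations in
`a = ⟪W, Y⟫`, `b = ⟪W, Z⟫`, `c = ⟪X, Y⟫`, `d = ⟪X, Z⟫`. Since `⟪R(A, B) C, C⟫ = 0`, first
`⟪W, X⟫ = 0`; then `κ d = σ a`, `κ a = σ d`, `-κ b = σ c`, `-κ c = σ b` and `κ (a d - b c) = σ`.
These force `(κ² - σ²) a = (κ² - σ²) b = 0` and `σ² = κ² (a² + b²)`, so `σ ≠ 0` gives `κ² = σ²`,
from which all three relations follow.
-/

open scoped RealInnerProductSpace

namespace ConstantCurvature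

variable {V : Type*} [NormedAddCommGroup V] [InnerProductSpace ℝ V]

def curvature (κ : ℝ) (X Y Z : V) : V := κ • (⟪Z, Y⟫ • X - ⟪Z, X⟫ • Y)

theorem inner_curvature (κ : ℝ) (U X Y Z : V) :
    ⟪U, curvature κ X Y Z⟫ = κ * (⟪Z, Y⟫ * ⟪U, X⟫ - ⟪Z, X⟫ * ⟪U, Y⟫) := by
  simp only [curvature, real_inner_smul_right, inner_sub_right]

theorem inner_curvature_self (κ : ℝ) (X Y Z : V) : ⟪Z, curvature κ X Y Z⟫ = 0 := by
  rw [inner_curvature]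
  ring

theorem inner_curvature_left {X Y : V} (κ : ℝ) (Z : V) (hX : ‖X‖ = 1) (hXY : ⟪X, Y⟫ = 0) :
    ⟪X, curvature κ X Y Z⟫ = κ * ⟪Y, Z⟫ := by
  rw [inner_curvature, real_inner_self_eq_norm_sq, hX, hXY, real_inner_comm Z Y]
  ring

theorem inner_curvature_right {X Y : V} (κ : ℝ) (Z : V) (hY : ‖Y‖ = 1) (hXY : ⟪X, Y⟫ = 0) :
    ⟪Y, curvature κ X Y Z⟫ = -(κ * ⟪X, Z⟫) := by
  rw [inner_curvature, real_inner_self_eq_norm_sq, hY, real_inner_comm X Y, hXY,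
    real_inner_comm X Z]
  ring

theorem inner_eq_zero_of_curvature_eq_smul {κ σ : ℝ} {X Y Z W : V} (hσ : σ ≠ 0)
    (h : curvature κ X Y Z = σ • W) : ⟪Z, W⟫ = 0 := by
  have hσW : σ * ⟪Z, W⟫ = 0 := by
    rw [← real_inner_smul_right, ← h, inner_curvature_self]
  exact (mul_eq_zero.1 hσW).resolve_left hσ

theorem singular_scalar_relations {κ σ a b c d : ℝ} (hσ : σ ≠ 0)
    (hda : κ * d = σ * a) (had : κ * a = σ * d) (hbc : -(κ * b) = σ * c)
    (hcb : -(κ * c) = σ * b) (hdet : κ * (a * d - b * c) = σ) :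
    |a| = |d| ∧ |b| = |c| ∧ a ^ 2 + b ^ 2 = 1 := by
  have hσsq : σ ^ 2 = κ ^ 2 * (a ^ 2 + b ^ 2) := by
    linear_combination (-σ) * hdet - (κ * a) * had + (κ * b) * hbc
  have hκσ : κ ^ 2 = σ ^ 2 := by
    by_contra hne
    have hne' : κ ^ 2 - σ ^ 2 ≠ 0 := sub_ne_zero.2 hne
    have ha : a = 0 := (mul_eq_zero.1 (show (κ ^ 2 - σ ^ 2) * a = 0 by
      linear_combination κ * had + σ * hda)).resolve_left hne'
    have hb : b = 0 := (mul_eq_zero.1 (show (κ ^ 2 - σ ^ 2) * b = 0 by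
      linear_combination (-κ) * hbc + σ * hcb)).resolve_left hne'
    exact pow_ne_zero 2 hσ (by rw [hσsq, ha, hb]; ring)
  have hκ : κ ^ 2 ≠ 0 := hκσ ▸ pow_ne_zero 2 hσ
  refine ⟨?_, ?_, ?_⟩
  · rw [← sq_eq_sq_iff_abs_eq_abs]
    exact mul_left_cancel₀ hκ (by linear_combination (κ * a + σ * d) * had - d ^ 2 * hκσ)
  · rw [← sq_eq_sq_iff_abs_eq_abs]
    exact mul_left_cancel₀ hκ (by linear_combination (σ * c - κ * b) * hbc - c ^ 2 * hκσ)
  · exact mul_left_cancel₀ hκ (by linear_combination -hσsq - hκσ)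

end ConstantCurvature

open ConstantCurvature

theorem svp_constant_curvature_inner_relations_general
    {V : Type*} [NormedAddCommGroup V] [InnerProductSpace ℝ V]
    (κ : ℝ) (W X Y Z : V) (σ : ℝ)
    (hW : ‖W‖ = 1) (hX : ‖X‖ = 1)
    (e1 : κ • (⟪X, Z⟫ • Y - ⟪X, Y⟫ • Z) = σ • W)
    (e2 : κ • (⟪W, Y⟫ • Z - ⟪W, Z⟫ • Y) = σ • X)
    (e3 : κ • (⟪Z, X⟫ • W - ⟪Z, W⟫ • X) = σ • Y)
    (e4 : κ • (⟪Y, W⟫ • X - ⟪Y, X⟫ • W) = σ • Z)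
    (hσ : σ ≠ 0) :
    |⟪W, Y⟫| = |⟪X, Z⟫| ∧ |⟪W, Z⟫| = |⟪X, Y⟫| ∧
    ⟪W, Y⟫ ^ 2 + ⟪W, Z⟫ ^ 2 = 1 := by
  -- `e1`–`e4` are `curvature κ Y Z X = σ • W`, `curvature κ Z Y W = σ • X`,
  -- `curvature κ W X Z = σ • Y`, `curvature κ X W Y = σ • Z` with `curvature` unfolded.
  have pair : ∀ {A B C D : V}, curvature κ A B C = σ • D →
      ∀ U, ⟪U, curvature κ A B C⟫ = σ * ⟪U, D⟫ := fun h U => by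
    rw [h, real_inner_smul_right]
  have hXW : ⟪X, W⟫ = 0 := inner_eq_zero_of_curvature_eq_smul hσ e1
  have hWX : ⟪W, X⟫ = 0 := inner_eq_zero_of_curvature_eq_smul hσ e2
  have hdet := (inner_curvature κ X Z Y W).symm.trans (pair e2 X)
  rw [real_inner_self_eq_norm_sq, hX, one_pow, mul_one] at hdet
  exact singular_scalar_relations hσ
    ((inner_curvature_left κ Z hW hWX).symm.trans (pair e3 W))
    ((inner_curvature_left κ Y hX hXW).symm.trans (pair e4 X))
    ((inner_curvature_right κ Z hX hWX).symm.trans (pair e3 X))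
    ((inner_curvature_right κ Y hW hXW).symm.trans (pair e4 W))
    hdet

/-- Example 2: for the constant sectional curvature tensor with `κ ≠ 0` and a
singular 5-tuple with `σ ≠ 0`, one has `|⟨W,Y⟩| = |⟨X,Z⟩|`, `|⟨W,Z⟩| = |⟨X,Y⟩|`
and `⟨W,Y⟩² + ⟨W,Z⟩² = 1`. -/
theorem svp_constant_curvature_inner_relations
    {V : Type*} [NormedAddCommGroup V] [InnerProductSpace ℝ V]
    (κ : ℝ) (hκ : κ ≠ 0) (W X Y Z : V) (σ : ℝ)
    (hW : ‖W‖ = 1) (hX : ‖X‖ = 1) (hY : ‖Y‖ = 1) (hZ : ‖Z‖ = 1)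
    (e1 : κ • (⟪X, Z⟫ • Y - ⟪X, Y⟫ • Z) = σ • W)
    (e2 : κ • (⟪W, Y⟫ • Z - ⟪W, Z⟫ • Y) = σ • X)
    (e3 : κ • (⟪Z, X⟫ • W - ⟪Z, W⟫ • X) = σ • Y)
    (e4 : κ • (⟪Y, W⟫ • X - ⟪Y, X⟫ • W) = σ • Z)
    (hσ : σ ≠ 0) :
    |⟪W, Y⟫| = |⟪X, Z⟫| ∧ |⟪W, Z⟫| = |⟪X, Y⟫| ∧
    ⟪W, Y⟫ ^ 2 + ⟪W, Z⟫ ^ 2 = 1 :=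
  svp_constant_curvature_inner_relations_general κ W X Y Z σ hW hX e1 e2 e3 e4 hσ
end

section
/- With S and Λ = diag(A,B,C,D) as below, det(S ± iσΛ^{-1}) = det(S) + σ²·det(Λ^{-1})·(σ² + AB(2S^{01})² + AC(S^{20})² + AD(S^{30})² − CD(2S^{23})² − BD(S^{13})² − BC(S^{21})²) for any σ ∈ ℝ and nonzero A,B,C,D ∈ ℝ. -/
/-!
Expanding `det (S + t Λ⁻¹)` in `t`, the coefficient of `tᵏ` is the sum, over `k`-element sets `I`
of indices, of `∏_{i ∈ I} Λ⁻¹ᵢᵢ` times the principal minor of `S` on the complement of `I`.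
Since `S` has zero diagonal and its principal `3 × 3` minors vanish (by the antisymmetry of
`Sⁱʲ`), only `t⁰`, `t²` and `t⁴` survive; the `2 × 2` principal minors are `±` the squared entries,
and `t = ± iσ` gives `t² = -σ²`, `t⁴ = σ⁴`.
-/

open Matrix

theorem Matrix.det_fin_four {R : Type*} [CommRing R] (M : Matrix (Fin 4) (Fin 4) R) :
    M.det =
      M 0 0 * det !![M 1 1, M 1 2, M 1 3; M 2 1, M 2 2, M 2 3; M 3 1, M 3 2, M 3 3]
      - M 0 1 * det !![M 1 0, M 1 2, M 1 3; M 2 0, M 2 2, M 2 3; M 3 0, M 3 2, M 3 3]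
      + M 0 2 * det !![M 1 0, M 1 1, M 1 3; M 2 0, M 2 1, M 2 3; M 3 0, M 3 1, M 3 3]
      - M 0 3 * det !![M 1 0, M 1 1, M 1 2; M 2 0, M 2 1, M 2 2; M 3 0, M 3 1, M 3 2] := by
  rw [det_succ_row_zero, Fin.sum_univ_four]
  simp only [det_fin_three]
  simp only [Fin.coe_ofNat_eq_mod, submatrix_apply, Fin.reduceSucc, Fin.succAbove, ↓reduceIte,
    Fin.reduceCastSucc, Fin.reduceLT, of_apply, cons_val]
  ring

section SchwarzschildMatrix

variable {R : Type*}

def schwarzschildMatrix [Semiring R] (Sc : Fin 4 → Fin 4 → R) :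
    Matrix (Fin 4) (Fin 4) R :=
  !![0,         2 * Sc 0 1, Sc 2 0,     Sc 3 0;
     2 * Sc 0 1, 0,         Sc 2 1,     Sc 3 1;
     Sc 2 0,     Sc 1 2,    0,          2 * Sc 2 3;
     Sc 3 0,     Sc 1 3,    2 * Sc 3 2, 0]

theorem map_schwarzschildMatrix {S : Type*} [Semiring R] [Semiring S] (f : R →+* S)
    (Sc : Fin 4 → Fin 4 → R) :
    (schwarzschildMatrix Sc).map f = schwarzschildMatrix fun i j ↦ f (Sc i j) := by
  ext i j
  fin_cases i <;> fin_cases j <;> simp [schwarzschildMatrix, map_ofNat]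

theorem det_schwarzschildMatrix_add_diagonal [CommRing R] (Sc : Fin 4 → Fin 4 → R)
    (hSc : ∀ i j, Sc j i = -Sc i j) (p q r s : R) :
    (schwarzschildMatrix Sc + diagonal ![p, q, r, s]).det =
      (schwarzschildMatrix Sc).det
        + (p * q * (2 * Sc 2 3) ^ 2 + p * r * Sc 1 3 ^ 2 + p * s * Sc 2 1 ^ 2
          - q * r * Sc 3 0 ^ 2 - q * s * Sc 2 0 ^ 2 - r * s * (2 * Sc 0 1) ^ 2)
        + p * q * r * s := by
  simp only [schwarzschildMatrix, hSc 2 1, hSc 3 1, hSc 2 3, det_fin_four, det_fin_three, Matrix.add_apply,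
    of_apply, cons_val, diagonal_apply_eq, diagonal_apply_ne, ne_eq, Fin.reduceEq, not_false_eq_true]
  ring

theorem det_schwarzschildMatrix_add_smul_diagonal [CommRing R] (Sc : Fin 4 → Fin 4 → R)
    (hSc : ∀ i j, Sc j i = -Sc i j) (t p q r s : R) :
    (schwarzschildMatrix Sc + t • diagonal ![p, q, r, s]).det =
      (schwarzschildMatrix Sc).det
        + t ^ 2 * (p * q * (2 * Sc 2 3) ^ 2 + p * r * Sc 1 3 ^ 2 + p * s * Sc 2 1 ^ 2
          - q * r * Sc 3 0 ^ 2 - q * s * Sc 2 0 ^ 2 - r * s * (2 * Sc 0 1) ^ 2)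
        + t ^ 4 * (p * q * r * s) := by
  rw [← diagonal_smul]
  simp only [smul_cons, smul_eq_mul, smul_empty]
  rw [det_schwarzschildMatrix_add_diagonal Sc hSc]
  ring

end SchwarzschildMatrix

/-- Example 4: the determinant expansion
`det(S ± iσΛ⁻¹) = det(S) + σ²·det(Λ⁻¹)·(σ² + AB(2S⁰¹)² + AC(S²⁰)² + AD(S³⁰)²
− CD(2S²³)² − BD(S¹³)² − BC(S²¹)²)`. -/
theorem schwarzschild_det_expansion (y z : Fin 4 → ℝ)
    (A B C D σ : ℝ) (hA : A ≠ 0) (hB : B ≠ 0) (hC : C ≠ 0) (hD : D ≠ 0)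
    (Sc : Fin 4 → Fin 4 → ℝ) (hSc : ∀ i j, Sc i j = y i * z j - y j * z i)
    (S : Matrix (Fin 4) (Fin 4) ℝ)
    (hS : S = Matrix.of
      !![0,         2 * Sc 0 1, Sc 2 0,     Sc 3 0;
         2 * Sc 0 1, 0,         Sc 2 1,     Sc 3 1;
         Sc 2 0,     Sc 1 2,    0,          2 * Sc 2 3;
         Sc 3 0,     Sc 1 3,    2 * Sc 3 2, 0])
    (Λinv : Matrix (Fin 4) (Fin 4) ℂ)
    (hΛinv : Λinv = Matrix.diagonal ![(A : ℂ)⁻¹, (B : ℂ)⁻¹, (C : ℂ)⁻¹, (D : ℂ)⁻¹]) :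
    ∀ ε : ℝ, ε = 1 ∨ ε = -1 →
      (S.map (Complex.ofReal) + ((ε : ℂ) * Complex.I * (σ : ℂ)) • Λinv).det =
        (S.det : ℂ) +
        ((σ ^ 2 * (A * B * C * D)⁻¹ *
          (σ ^ 2 + A * B * (2 * Sc 0 1) ^ 2 + A * C * (Sc 2 0) ^ 2
            + A * D * (Sc 3 0) ^ 2 - C * D * (2 * Sc 2 3) ^ 2
            - B * D * (Sc 1 3) ^ 2 - B * C * (Sc 2 1) ^ 2) : ℝ) : ℂ) := by
  intro ε hε
  have hS : S = schwarzschildMatrix Sc := hS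
  have hSc_anti : ∀ i j, ((Sc j i : ℝ) : ℂ) = -Sc i j := fun i j ↦ by
    rw [hSc, hSc]; push_cast; ring
  set t : ℂ := ε * Complex.I * σ
  have ht : t ^ 2 = -(σ : ℂ) ^ 2 := by
    have hε2 : (ε : ℂ) ^ 2 = 1 := by rcases hε with rfl | rfl <;> norm_num
    linear_combination (σ : ℂ) ^ 2 * (Complex.I ^ 2 * hε2 + Complex.I_sq)
  have hmap : S.map Complex.ofReal = schwarzschildMatrix fun i j ↦ (Sc i j : ℂ) :=
    hS ▸ map_schwarzschildMatrix Complex.ofRealHom Sc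
  have hdet : (S.det : ℂ) = (S.map Complex.ofReal).det := RingHom.map_det Complex.ofRealHom S
  rw [hdet, hmap, hΛinv, det_schwarzschildMatrix_add_smul_diagonal _ hSc_anti, ht,
    show t ^ 4 = (t ^ 2) ^ 2 by ring, ht]
  have hA' : (A : ℂ) ≠ 0 := by exact_mod_cast hA
  have hB' : (B : ℂ) ≠ 0 := by exact_mod_cast hB
  have hC' : (C : ℂ) ≠ 0 := by exact_mod_cast hC
  have hD' : (D : ℂ) ≠ 0 := by exact_mod_cast hD
  push_cast
  field_simp
  ring
end

section
/- In the Schwarzschild curvature model, let A = r_s f(r)/(2r³), B = r_s/(2r³f(r)), C = r_s/(2r), D = (r_s/(2r))sin²θ with f(r) = 1 − r_s/r, r > r_s > 0, sinθ ≠ 0, and metric g = diag(−f, 1/f, r², r² sin²θ). Suppose x, y ∈ ℝ⁴ and σ ∈ ℝ satisfy the reduced system: C x²y⁰y² + D x³y⁰y³ = (σ/2)x⁰, C x²y¹y² + D x³y¹y³ = (σ/2)x¹, −A x⁰y⁰y² + B x¹y¹y² = (σ/2)x², −A x⁰y⁰y³ + B x¹y¹y³ = (σ/2)x³, together with the four analogous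 equations with x and y interchanged, and ⟨x,x⟩_g = ⟨y,y⟩_g = 1. Then either σ = 0 or σ² = (r_s/(2r³))². -/
/-!
The curvature operator of the Schwarzschild model acts blockwise on the `(t, r)` and `(θ, φ)`
coordinates: with `k = r_s/(2r³)`, the coefficients `A, B, C, D` are `k` times the matching
entries of `g`, so the reduced system says that `k⟨x,y⟩_{θφ}` swaps the `(t, r)`-parts of `x`
and `y` up to the factor `σ/2`, and `k⟨x,y⟩_{tr}` swaps their `(θ, φ)`-parts. Pairing with `x`
and using `⟨x,x⟩_g = 1` gives `σ/2 = 2k⟨x,y⟩_{tr}⟨x,y⟩_{θφ}`, while applying each swap twice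
gives `(σ/2)² = (k⟨x,y⟩_{θφ})² = (k⟨x,y⟩_{tr})²` when `σ ≠ 0`. Together these force `σ² = k²`.
-/

open LinearMap (BilinForm)

theorem Matrix.toBilin'_diagonal_apply {R n : Type*} [CommRing R] [Fintype n] [DecidableEq n]
    (c v w : n → R) : Matrix.toBilin' (Matrix.diagonal c) v w = ∑ i, c i * v i * w i := by
  simp only [Matrix.toBilin'_apply, Matrix.diagonal_apply, mul_ite, ite_mul, mul_zero, zero_mul,
    Finset.sum_ite_eq, Finset.mem_univ, if_true]
  exact Finset.sum_congr rfl fun i _ ↦ by ring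

section BlockSwap

variable {K M N : Type*} [Field K] [AddCommGroup M] [Module K M] [AddCommGroup N] [Module K N]

theorem sq_eq_sq_of_smul_swap {a s : K} {u u' : M} (h : a • u' = s • u) (h' : a • u = s • u')
    (hu : u ≠ 0) : s ^ 2 = a ^ 2 := by
  have : (s ^ 2 - a ^ 2) • u = 0 := by
    rw [sub_smul, pow_two, pow_two, mul_smul, mul_smul, ← h, h', smul_comm]; exact sub_self _
  exact sub_eq_zero.mp ((smul_eq_zero.mp this).resolve_right hu)

variable (β : BilinForm K M) (γ : BilinForm K N) {k s : K} {u u' : M} {v v' : N}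

theorem eq_two_mul_of_block_swap (hu : (k * γ v v') • u' = s • u) (hv : (k * β u u') • v' = s • v)
    (hnorm : β u u + γ v v = 1) : s = 2 * k * β u u' * γ v v' := by
  have hβ : s * β u u = k * γ v v' * β u u' := by
    rw [← smul_eq_mul, ← map_smul, ← hu, map_smul, smul_eq_mul]
  have hγ : s * γ v v = k * β u u' * γ v v' := by
    rw [← smul_eq_mul, ← map_smul, ← hv, map_smul, smul_eq_mul]
  linear_combination -s * hnorm + hβ + hγ

theorem eq_zero_or_four_mul_sq_eq_of_block_swap
    (hu : (k * γ v v') • u' = s • u) (hu' : (k * γ v v') • u = s • u')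
    (hv : (k * β u u') • v' = s • v) (hv' : (k * β u u') • v = s • v')
    (hnorm : β u u + γ v v = 1) : s = 0 ∨ 4 * s ^ 2 = k ^ 2 := by
  have hs := eq_two_mul_of_block_swap β γ hu hv hnorm
  rcases eq_or_ne s 0 with hs0 | hs0
  · exact Or.inl hs0
  have hβ : β u u' ≠ 0 := fun h ↦ hs0 (by simp [hs, h])
  have hγ : γ v v' ≠ 0 := fun h ↦ hs0 (by simp [hs, h])
  have hsqγ := sq_eq_sq_of_smul_swap hu hu' fun h ↦ hβ (by simp [h])
  have hsqβ := sq_eq_sq_of_smul_swap hv hv' fun h ↦ hγ (by simp [h])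
  have : s ^ 2 * (4 * s ^ 2 - k ^ 2) = 0 := by
    linear_combination (4 * s ^ 2) * hsqγ + (4 * (k * γ v v') ^ 2) * hsqβ
      - k ^ 2 * (s + 2 * k * β u u' * γ v v') * hs
  exact Or.inr (sub_eq_zero.mp ((mul_eq_zero.mp this).resolve_left (pow_ne_zero 2 hs0)))

end BlockSwap

theorem schwarzschild_reduced_svp_general
    (r rs θ : ℝ) (hrs : 0 < rs) (hr : rs < r)
    (x y : Fin 4 → ℝ) (σ : ℝ)
    (f A B C D : ℝ)
    (hA : A = rs * f / (2 * r ^ 3)) (hB : B = rs / (2 * r ^ 3 * f))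
    (hC : C = rs / (2 * r)) (hD : D = rs / (2 * r) * Real.sin θ ^ 2)
    (e1 : C * x 2 * y 0 * y 2 + D * x 3 * y 0 * y 3 = σ / 2 * x 0)
    (e2 : C * x 2 * y 1 * y 2 + D * x 3 * y 1 * y 3 = σ / 2 * x 1)
    (e3 : -A * x 0 * y 0 * y 2 + B * x 1 * y 1 * y 2 = σ / 2 * x 2)
    (e4 : -A * x 0 * y 0 * y 3 + B * x 1 * y 1 * y 3 = σ / 2 * x 3)
    (e5 : C * y 2 * x 0 * x 2 + D * y 3 * x 0 * x 3 = σ / 2 * y 0)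
    (e6 : C * y 2 * x 1 * x 2 + D * y 3 * x 1 * x 3 = σ / 2 * y 1)
    (e7 : -A * y 0 * x 0 * x 2 + B * y 1 * x 1 * x 2 = σ / 2 * y 2)
    (e8 : -A * y 0 * x 0 * x 3 + B * y 1 * x 1 * x 3 = σ / 2 * y 3)
    (hxnorm : -f * x 0 ^ 2 + x 1 ^ 2 / f + r ^ 2 * x 2 ^ 2
        + r ^ 2 * Real.sin θ ^ 2 * x 3 ^ 2 = 1) :
    σ = 0 ∨ σ ^ 2 = (rs / (2 * r ^ 3)) ^ 2 := by
  set k := rs / (2 * r ^ 3) with hk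
  have hr0 : r ≠ 0 := (hrs.trans hr).ne'
  obtain rfl : A = k * f := by rw [hA]; ring
  obtain rfl : B = k * (1 / f) := by rw [hB]; ring
  obtain rfl : C = k * r ^ 2 := by rw [hC, hk]; field_simp
  obtain rfl : D = k * (r ^ 2 * Real.sin θ ^ 2) := by rw [hD, hk]; field_simp
  refine (eq_zero_or_four_mul_sq_eq_of_block_swap (Matrix.toBilin' (Matrix.diagonal ![-f, 1 / f]))
    (Matrix.toBilin' (Matrix.diagonal ![r ^ 2, r ^ 2 * Real.sin θ ^ 2])) (k := k) (s := σ / 2)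
    (u := ![x 0, x 1]) (u' := ![y 0, y 1]) (v := ![x 2, x 3]) (v' := ![y 2, y 3])
    ?_ ?_ ?_ ?_ ?_).imp (fun h ↦ by linarith) (fun h ↦ by linarith)
  all_goals try (ext i; fin_cases i)
  all_goals simp only [Matrix.toBilin'_diagonal_apply, Fin.sum_univ_two, Pi.smul_apply,
    smul_eq_mul, Fin.zero_eta, Fin.mk_one, Matrix.cons_val_zero, Matrix.cons_val_one]
  · linear_combination e1
  · linear_combination e2
  · linear_combination e5
  · linear_combination e6
  · linear_combination e3
  · linear_combination e4
  · linear_combination e7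
  · linear_combination e8
  · linear_combination hxnorm

/-- Example 4: in the Schwarzschild curvature model, solutions of the reduced
singular value system with both vectors of unit `g`-norm have `σ = 0` or
`σ² = (r_s/(2r³))²`. -/
theorem schwarzschild_reduced_svp
    (r rs θ : ℝ) (hrs : 0 < rs) (hr : rs < r) (hθ : Real.sin θ ≠ 0)
    (x y : Fin 4 → ℝ) (σ : ℝ)
    (f A B C D : ℝ)
    (hf : f = 1 - rs / r)
    (hA : A = rs * f / (2 * r ^ 3)) (hB : B = rs / (2 * r ^ 3 * f))
    (hC : C = rs / (2 * r)) (hD : D = rs / (2 * r) * Real.sin θ ^ 2)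
    (e1 : C * x 2 * y 0 * y 2 + D * x 3 * y 0 * y 3 = σ / 2 * x 0)
    (e2 : C * x 2 * y 1 * y 2 + D * x 3 * y 1 * y 3 = σ / 2 * x 1)
    (e3 : -A * x 0 * y 0 * y 2 + B * x 1 * y 1 * y 2 = σ / 2 * x 2)
    (e4 : -A * x 0 * y 0 * y 3 + B * x 1 * y 1 * y 3 = σ / 2 * x 3)
    (e5 : C * y 2 * x 0 * x 2 + D * y 3 * x 0 * x 3 = σ / 2 * y 0)
    (e6 : C * y 2 * x 1 * x 2 + D * y 3 * x 1 * x 3 = σ / 2 * y 1)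
    (e7 : -A * y 0 * x 0 * x 2 + B * y 1 * x 1 * x 2 = σ / 2 * y 2)
    (e8 : -A * y 0 * x 0 * x 3 + B * y 1 * x 1 * x 3 = σ / 2 * y 3)
    (hxnorm : -f * x 0 ^ 2 + x 1 ^ 2 / f + r ^ 2 * x 2 ^ 2
        + r ^ 2 * Real.sin θ ^ 2 * x 3 ^ 2 = 1)
    (hynorm : -f * y 0 ^ 2 + y 1 ^ 2 / f + r ^ 2 * y 2 ^ 2
        + r ^ 2 * Real.sin θ ^ 2 * y 3 ^ 2 = 1) :
    σ = 0 ∨ σ ^ 2 = (rs / (2 * r ^ 3)) ^ 2 :=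
  schwarzschild_reduced_svp_general r rs θ hrs hr x y σ f A B C D hA hB hC hD e1 e2 e3 e4 e5 e6 e7
    e8 hxnorm
end
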